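/- Consider ℝ² with the Minkowski form ⟪(x,t),(x′,t′)⟫ = xx′ − tt′, and let B = {(x,t) ∈ ℝ² : x > 0 and xt ≥ 1}. Then B is a convex body; its normal cone with respect to the Minkowski form is N = {(a,b) ∈ ℝ² : a > 0 and b < 0} (the open fourth quadrant, which is open, so int N = N); its recession cone is R = {(u,v) ∈ ℝ² : u ≥ 0 and v ≥ 0} (the closed first quadrant); and consequently (int N) ∩ R = ∅. -/

import Mathlib

/-! `B` is the epigraph of `x ↦ x⁻¹` on `(0, ∞)`, hence a closed convex body. For `s, t > 0` the
boundary point `(t/s, s/t)` supports `B` with Minkowski normal `(s², -t²)` by AM–GM. Conversely, `B`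
is stable under adding vectors of the closed first quadrant, which forces a normal `(a, b)` to have
`a ≥ 0 ≥ b`, and `B` contains points with arbitrarily small first or second coordinate, which makes
both inequalities strict. The same two facts, together with `B` lying in the open first quadrant,
show that the recession cone is the closed first quadrant, which misses the open fourth one. -/

open Set

/-- The Minkowski form on `ℝ²`: `⟪(x,t),(x',t')⟫ = x x' − t t'`. -/
def mink2 (p q : ℝ × ℝ) : ℝ := p.1 * q.1 - p.2 * q.2

/-- The normal cone of a convex body `B ⊆ ℝ²` with respect to the Minkowski form. -/
def normalCone2 (B : Set (ℝ × ℝ)) : Set (ℝ × ℝ) :=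
  {w | w ≠ 0 ∧ ∃ p ∈ frontier B, ∀ x ∈ B, 0 ≤ mink2 (x - p) w}

/-- The recession cone of a convex body `B ⊆ ℝ²`. -/
def recessionCone2 (B : Set (ℝ × ℝ)) : Set (ℝ × ℝ) :=
  {v | ∀ x ∈ B, ∀ t : ℝ, 0 ≤ t → x + t • v ∈ B}

open Filter Topology

def hyperbolaRegion : Set (ℝ × ℝ) := {p | 0 < p.1 ∧ 1 ≤ p.1 * p.2}

lemma pos_of_mem_hyperbolaRegion {p : ℝ × ℝ} (hp : p ∈ hyperbolaRegion) : 0 < p.1 ∧ 0 < p.2 :=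
  ⟨hp.1, pos_of_mul_pos_right (one_pos.trans_le hp.2) hp.1.le⟩

lemma mk_inv_mem_hyperbolaRegion {t : ℝ} (ht : 0 < t) : (t, t⁻¹) ∈ hyperbolaRegion :=
  ⟨ht, (mul_inv_cancel₀ ht.ne').ge⟩

lemma add_mem_hyperbolaRegion {p v : ℝ × ℝ} (hp : p ∈ hyperbolaRegion) (hv : 0 ≤ v) :
    p + v ∈ hyperbolaRegion := by
  obtain ⟨hp₁, hp₂⟩ := pos_of_mem_hyperbolaRegion hp
  have hv₁ : 0 ≤ v.1 := hv.1
  have hv₂ : 0 ≤ v.2 := hv.2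
  refine ⟨by simp only [Prod.fst_add]; linarith, ?_⟩
  calc (1 : ℝ) ≤ p.1 * p.2 := hp.2
    _ ≤ (p + v).1 * (p + v).2 := by simp only [Prod.fst_add, Prod.snd_add]; gcongr <;> linarith

lemma hyperbolaRegion_eq_epigraph :
    hyperbolaRegion = {p : ℝ × ℝ | p.1 ∈ Ioi 0 ∧ p.1 ^ (-1 : ℤ) ≤ p.2} := by
  ext p
  simp only [hyperbolaRegion, mem_ofPred_eq, mem_Ioi, zpow_neg_one]
  exact and_congr_right fun h ↦ (inv_le_iff_one_le_mul₀' h).symm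

lemma convex_hyperbolaRegion : Convex ℝ hyperbolaRegion := by
  rw [hyperbolaRegion_eq_epigraph]
  exact (convexOn_zpow (𝕜 := ℝ) (-1)).convex_epigraph

lemma isClosed_hyperbolaRegion : IsClosed hyperbolaRegion := by
  have h : hyperbolaRegion = {p : ℝ × ℝ | 0 ≤ p.1} ∩ {p | 1 ≤ p.1 * p.2} := by
    ext p
    refine ⟨fun hp ↦ ⟨hp.1.le, hp.2⟩, fun ⟨h₁, h₂⟩ ↦ ⟨h₁.lt_of_ne ?_, h₂⟩⟩
    rintro h₀
    norm_num [← h₀] at h₂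
  rw [h]
  exact (isClosed_le continuous_const continuous_fst).inter
    (isClosed_le continuous_const (continuous_fst.mul continuous_snd))

lemma interior_hyperbolaRegion_nonempty : (interior hyperbolaRegion).Nonempty := by
  have hopen : IsOpen {p : ℝ × ℝ | 0 < p.1 ∧ 1 < p.1 * p.2} :=
    (isOpen_lt continuous_const continuous_fst).inter
      (isOpen_lt continuous_const (continuous_fst.mul continuous_snd))
  have hsub : {p : ℝ × ℝ | 0 < p.1 ∧ 1 < p.1 * p.2} ⊆ hyperbolaRegion := fun p hp ↦ ⟨hp.1, hp.2.le⟩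
  exact ⟨(1, 2), interior_maximal hsub hopen (by norm_num)⟩

lemma mk_mem_frontier_hyperbolaRegion {x y : ℝ} (hx : 0 < x) (hxy : x * y = 1) :
    (x, y) ∈ frontier hyperbolaRegion := by
  refine ⟨subset_closure ⟨hx, hxy.ge⟩, fun hint ↦ ?_⟩
  -- lowering `y` leaves `B`, however little
  have hnear : ∀ᶠ t in 𝓝 (0 : ℝ), (x, y - t) ∈ hyperbolaRegion :=
    ContinuousAt.preimage_mem_nhds (by fun_prop) (by simpa using mem_interior_iff_mem_nhds.1 hint)
  obtain ⟨t, ht, ht₀⟩ := ((hnear.filter_mono nhdsWithin_le_nhds).and self_mem_nhdsWithin).exists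
    (f := 𝓝[>] (0 : ℝ))
  have : 1 ≤ x * y - x * t := by simpa [mul_sub] using ht.2
  nlinarith [mul_pos hx (mem_Ioi.1 ht₀)]

lemma mem_normalCone2_hyperbolaRegion {s t : ℝ} (hs : 0 < s) (ht : 0 < t) :
    (s ^ 2, -t ^ 2) ∈ normalCone2 hyperbolaRegion := by
  refine ⟨by simp [Prod.ext_iff, hs.ne'], (t / s, s / t),
    mk_mem_frontier_hyperbolaRegion (by positivity) (by field_simp), fun x hx ↦ ?_⟩
  obtain ⟨hx₁, hx₂⟩ := hx
  have hexpand :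
      mink2 (x - (t / s, s / t)) (s ^ 2, -t ^ 2) = s ^ 2 * x.1 + t ^ 2 * x.2 - 2 * s * t := by
    simp only [mink2, Prod.fst_sub, Prod.snd_sub]
    field_simp
    ring
  -- AM–GM in the form `x.1 * (s² x.1 + t² x.2 - 2 s t) ≥ (s x.1 - t)²`, using `x.1 x.2 ≥ 1`
  rw [hexpand]
  nlinarith [sq_nonneg (s * x.1 - t), mul_le_mul_of_nonneg_left hx₂ (sq_nonneg t)]

lemma normalCone2_hyperbolaRegion_subset :
    normalCone2 hyperbolaRegion ⊆ {w : ℝ × ℝ | 0 < w.1 ∧ w.2 < 0} := by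
  rintro ⟨a, b⟩ ⟨hw, p, hpf, hsupp⟩
  have hp := isClosed_hyperbolaRegion.frontier_subset hpf
  obtain ⟨hp₁, hp₂⟩ := pos_of_mem_hyperbolaRegion hp
  have supp (x : ℝ × ℝ) (hx : x ∈ hyperbolaRegion) : 0 ≤ (x.1 - p.1) * a - (x.2 - p.2) * b :=
    hsupp x hx
  have he₁ : (0 : ℝ × ℝ) ≤ (1, 0) := by norm_num [Prod.le_def]
  have he₂ : (0 : ℝ × ℝ) ≤ (0, 1) := by norm_num [Prod.le_def]
  have ha : 0 ≤ a := by simpa using supp _ (add_mem_hyperbolaRegion hp he₁)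
  have hb : b ≤ 0 := by simpa using supp _ (add_mem_hyperbolaRegion hp he₂)
  have hleft := supp _ (mk_inv_mem_hyperbolaRegion (half_pos hp₁))
  have hlow := supp _ (mk_inv_mem_hyperbolaRegion (inv_pos.2 (half_pos hp₂)))
  simp only [inv_inv] at hleft hlow
  have ha' : 0 < a := by
    refine ha.lt_of_ne fun ha₀ ↦ hw ?_
    subst ha₀
    have : b = 0 := le_antisymm hb (by nlinarith)
    simp [this]
  refine ⟨ha', hb.lt_of_ne fun hb₀ ↦ ?_⟩
  subst hb₀
  nlinarith

lemma normalCone2_hyperbolaRegion :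
    normalCone2 hyperbolaRegion = {w : ℝ × ℝ | 0 < w.1 ∧ w.2 < 0} := by
  refine normalCone2_hyperbolaRegion_subset.antisymm fun w ⟨ha, hb⟩ ↦ ?_
  have hw : w = (√w.1 ^ 2, -√(-w.2) ^ 2) := by
    rw [Real.sq_sqrt ha.le, Real.sq_sqrt (neg_nonneg.2 hb.le), neg_neg]
  rw [hw]
  exact mem_normalCone2_hyperbolaRegion (Real.sqrt_pos.2 ha) (Real.sqrt_pos.2 (neg_pos.2 hb))

lemma nonneg_of_mem_recessionCone2 {B : Set (ℝ × ℝ)} (f : ℝ × ℝ →ₗ[ℝ] ℝ)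
    (hf : ∀ p ∈ B, 0 < f p) {x : ℝ × ℝ} (hx : x ∈ B) {v : ℝ × ℝ} (hv : v ∈ recessionCone2 B) :
    0 ≤ f v := by
  by_contra! hneg
  -- at time `-f x / f v` the ray from `x` reaches the hyperplane `f = 0`
  have hpos := hf _ (hv x hx (-f x / f v) (div_nonneg_of_nonpos (by linarith [hf x hx]) hneg.le))
  rw [map_add, map_smul, smul_eq_mul, div_mul_cancel₀ _ hneg.ne] at hpos
  simp at hpos

lemma recessionCone2_hyperbolaRegion :
    recessionCone2 hyperbolaRegion = {v : ℝ × ℝ | 0 ≤ v.1 ∧ 0 ≤ v.2} := by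
  have h₁₁ : ((1, 1) : ℝ × ℝ) ∈ hyperbolaRegion := by simpa using mk_inv_mem_hyperbolaRegion one_pos
  refine Subset.antisymm (fun v hv ↦ ⟨?_, ?_⟩) fun v hv x hx t ht ↦ ?_
  · exact nonneg_of_mem_recessionCone2 (LinearMap.fst ℝ ℝ ℝ)
      (fun p hp ↦ (pos_of_mem_hyperbolaRegion hp).1) h₁₁ hv
  · exact nonneg_of_mem_recessionCone2 (LinearMap.snd ℝ ℝ ℝ)
      (fun p hp ↦ (pos_of_mem_hyperbolaRegion hp).2) h₁₁ hv
  · exact add_mem_hyperbolaRegion hx (smul_nonneg ht (show 0 ≤ v from hv))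

theorem stmt_12 :
    Convex ℝ {p : ℝ × ℝ | 0 < p.1 ∧ 1 ≤ p.1 * p.2} ∧
    IsClosed {p : ℝ × ℝ | 0 < p.1 ∧ 1 ≤ p.1 * p.2} ∧
    (interior {p : ℝ × ℝ | 0 < p.1 ∧ 1 ≤ p.1 * p.2}).Nonempty ∧
    normalCone2 {p : ℝ × ℝ | 0 < p.1 ∧ 1 ≤ p.1 * p.2} =
      {w : ℝ × ℝ | 0 < w.1 ∧ w.2 < 0} ∧
    interior (normalCone2 {p : ℝ × ℝ | 0 < p.1 ∧ 1 ≤ p.1 * p.2}) =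
      normalCone2 {p : ℝ × ℝ | 0 < p.1 ∧ 1 ≤ p.1 * p.2} ∧
    recessionCone2 {p : ℝ × ℝ | 0 < p.1 ∧ 1 ≤ p.1 * p.2} =
      {v : ℝ × ℝ | 0 ≤ v.1 ∧ 0 ≤ v.2} ∧
    interior (normalCone2 {p : ℝ × ℝ | 0 < p.1 ∧ 1 ≤ p.1 * p.2}) ∩
      recessionCone2 {p : ℝ × ℝ | 0 < p.1 ∧ 1 ≤ p.1 * p.2} = ∅ := by
  have hN := normalCone2_hyperbolaRegion
  have hopen : IsOpen {w : ℝ × ℝ | 0 < w.1 ∧ w.2 < 0} :=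
    (isOpen_lt continuous_const continuous_fst).inter (isOpen_lt continuous_snd continuous_const)
  have hint : interior (normalCone2 hyperbolaRegion) = normalCone2 hyperbolaRegion := by
    rw [hN, hopen.interior_eq]
  have hdisj : interior (normalCone2 hyperbolaRegion) ∩ recessionCone2 hyperbolaRegion = ∅ := by
    rw [hint, hN, recessionCone2_hyperbolaRegion]
    exact eq_empty_of_forall_notMem fun w ⟨⟨_, hb⟩, _, hb'⟩ ↦ absurd hb' (not_le.2 hb)
  exact ⟨convex_hyperbolaRegion, isClosed_hyperbolaRegion, interior_hyperbolaRegion_nonempty, hN,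
    hint, recessionCone2_hyperbolaRegion, hdisj⟩
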